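/- arXiv:1401.4967 — 6 statements merged into one kernel-verified Lean document; each statement's English description precedes it below -/
import Mathlib

section
/- For the ring of N vertices with identical local 3×3 scattering matrix S(k), equal edge lengths d, and flux per edge θ, the eigenvalues of the total scattering matrix are λ_a(k,θ) = λ(k, θ + 2(a-1)π/N), a = 1,...,N, where λ(k,θ) = [e^{2ikd} det S + e^{ikd}((S_{11}S_{23}-S_{13}S_{21})e^{iθ} + (S_{11}S_{32}-S_{31}S_{12})e^{-iθ}) - S_{11}] / [e^{2ikd}(S_{22}S_{33}-S_{23}S_{32}) + e^{ikd}(S_{23}e^{iθ} + S_{32}e^{-iθ}) - 1]. -/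
/-!
The rows `r_b c = ω ^ (b c)` of the DFT matrix (`ω = e^{2πi/N}`) are Bloch waves,
`r_b (c + 1) = ω ^ b * r_b c`, and they are left eigenvectors of `𝕊`: for such a row the
internal amplitudes `v` solving `v (E - S^{in-in}) = r_b S^{out-in}` have the form
`v (a, i) = r_b a * y i`, which reduces the problem on the ring to the `2 × 2` system
`y M_b = (S₁₂, S₁₃)` with the Bloch symbol
`M_b = [[0, e^{-ikd} z⁻¹], [e^{-ikd} z, 0]] - [[S₂₂, S₂₃], [S₃₂, S₃₃]]`, `z = e^{i(θ + 2πb/N)}`.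
The eigenvalue `S₁₁ + y ⬝ (S₂₁, S₃₁)` is the stated ratio by Cramer's rule, its denominator
being `e^{2ikd} det M_b`. The DFT matrix is a Vandermonde matrix in distinct roots of unity,
hence invertible.
-/

open Matrix Complex

namespace RingScattering

section Blocks

variable {R : Type*} [CommRing R] (n : Type*) {ι ι' : Type*} [DecidableEq n]

def ringDiag (T : Matrix ι ι' R) : Matrix (n × ι) (n × ι') R :=
  of fun p q => if p.1 = q.1 then T p.2 q.2 else 0

def ringCol (t : ι → R) : Matrix (n × ι) n R :=
  of fun p b => if p.1 = b then t p.2 else 0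

def ringRow (s : ι → R) : Matrix n (n × ι) R :=
  of fun a q => if a = q.1 then s q.2 else 0

variable {n} [Fintype n]

lemma vecMul_ringDiag [Fintype ι] (r : n → R) (y : ι → R) (T : Matrix ι ι' R) :
    vecMul (fun p => r p.1 * y p.2) (ringDiag n T) = fun q => r q.1 * vecMul y T q.2 := by
  ext ⟨c, j⟩
  simp [vecMul, dotProduct, ringDiag, Fintype.sum_prod_type, Finset.mul_sum, mul_assoc]

lemma vecMul_ringCol [Fintype ι] (r : n → R) (y t : ι → R) :
    vecMul (fun p => r p.1 * y p.2) (ringCol n t) = (y ⬝ᵥ t) • r := by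
  ext c
  simp [vecMul, dotProduct, ringCol, Fintype.sum_prod_type, Finset.mul_sum, mul_comm, mul_left_comm]

lemma vecMul_ringRow (r : n → R) (s : ι → R) :
    vecMul r (ringRow n s) = fun q => r q.1 * s q.2 := by
  ext ⟨c, j⟩
  simp [vecMul, dotProduct, ringRow]

lemma vecMul_mul_inv_mul_of_vecMul_eq {m : Type*} [Fintype m] {A : Matrix n n R}
    (hA : IsUnit A.det) (B : Matrix m n R) (C : Matrix n m R) {r : m → R} {v : n → R}
    (hv : vecMul v A = vecMul r B) : vecMul r (B * A⁻¹ * C) = vecMul v C := by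
  rw [← vecMul_vecMul, ← vecMul_vecMul, ← hv, vecMul_vecMul v A, mul_nonsing_inv _ hA,
    vecMul_one]

lemma eq_inv_mul_diagonal_mul_of_vecMul {A W : Matrix n n R} {μ : n → R} (hW : IsUnit W.det)
    (h : ∀ b, vecMul (W b) A = μ b • W b) : A = W⁻¹ * diagonal μ * W := by
  have hWA : W * A = diagonal μ * W := by
    ext b c
    rw [diagonal_mul, mul_apply]
    exact congrFun (h b) c
  rw [mul_assoc, ← hWA, ← mul_assoc, nonsing_inv_mul _ hW, one_mul]

end Blocks

section Bloch

variable {R : Type*} [Field R]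

/-- Internal mode `(a, 0)` lives on the edge from `a` to `a + 1`, mode `(a, 1)` on the edge
from `a` to `a - 1`; `α` and `β` are the phases picked up along them. -/
def ringHop (N : ℕ) [NeZero N] (α β : R) : Matrix (Fin N × Fin 2) (Fin N × Fin 2) R :=
  of fun p q => if p.2 = 0 ∧ q = (p.1 + 1, 1) then α
    else if p.2 = 1 ∧ q = (p.1 - 1, 0) then β else 0

def blochSymbol (T : Matrix (Fin 2) (Fin 2) R) (p q : R) : Matrix (Fin 2) (Fin 2) R :=
  !![0, p; q, 0] - T

variable {N : ℕ} [NeZero N]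

lemma vecMul_ringHop (α β : R) {w : R} (hw : w ≠ 0) {r : Fin N → R}
    (hr : ∀ a, r (a + 1) = w * r a) (y : Fin 2 → R) :
    vecMul (fun p => r p.1 * y p.2) (ringHop N α β) =
      fun q => r q.1 * vecMul y !![0, α * w⁻¹; β * w, 0] q.2 := by
  have hr' : ∀ c, r (c - 1) = w⁻¹ * r c := fun c => by
    rw [eq_inv_mul_iff_mul_eq₀ hw, ← hr, sub_add_cancel]
  ext ⟨c, j⟩
  fin_cases j <;>
    simp only [vecMul, dotProduct, ringHop, Fin.isValue, Fin.zero_eta, Fin.mk_one, of_apply,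
      Prod.mk.injEq, ← sub_eq_iff_eq_add, eq_sub_iff_add_eq, zero_ne_one, one_ne_zero, and_false,
      false_and, and_true, true_and, ↓reduceIte, mul_ite, mul_zero, Fintype.sum_prod_type,
      Fin.sum_univ_two, zero_add, add_zero, Finset.sum_ite_eq, Finset.mem_univ, hr, hr',
      cons_val', cons_val_zero, cons_val_one, cons_val_fin_one] <;>
    ring

lemma vecMul_totalScattering_eq_smul (σ : R) (s t : Fin 2 → R) (T : Matrix (Fin 2) (Fin 2) R)
    (α β : R) {w : R} (hw : w ≠ 0) {r : Fin N → R} (hr : ∀ a, r (a + 1) = w * r a)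
    (hA : IsUnit (ringHop N α β - ringDiag (Fin N) T).det)
    (hM : IsUnit (blochSymbol T (α * w⁻¹) (β * w)).det) :
    vecMul r (σ • 1 + ringRow (Fin N) s * (ringHop N α β - ringDiag (Fin N) T)⁻¹ *
        ringCol (Fin N) t) =
      (σ + vecMul s (blochSymbol T (α * w⁻¹) (β * w))⁻¹ ⬝ᵥ t) • r := by
  set y := vecMul s (blochSymbol T (α * w⁻¹) (β * w))⁻¹
  have hy : vecMul y (blochSymbol T (α * w⁻¹) (β * w)) = s := by
    rw [vecMul_vecMul, nonsing_inv_mul _ hM, vecMul_one]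
  have hv : vecMul (fun p => r p.1 * y p.2) (ringHop N α β - ringDiag (Fin N) T) =
      vecMul r (ringRow (Fin N) s) := by
    rw [vecMul_sub, vecMul_ringHop α β hw hr, vecMul_ringDiag, vecMul_ringRow, ← hy,
      blochSymbol, vecMul_sub]
    ext q
    simp only [Pi.sub_apply, mul_sub]
  rw [vecMul_add, vecMul_smul, vecMul_one, vecMul_mul_inv_mul_of_vecMul_eq hA _ _ hv,
    vecMul_ringCol, add_smul]

end Bloch

section Symbol

variable {R : Type*} [Field R] (S : Matrix (Fin 3) (Fin 3) R) {u z : R}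

lemma sq_mul_det_blochSymbol (hu : u ≠ 0) (hz : z ≠ 0) :
    u ^ 2 * (blochSymbol (S.submatrix Fin.succ Fin.succ) (u⁻¹ * z⁻¹) (u⁻¹ * z)).det =
      u ^ 2 * (S 1 1 * S 2 2 - S 1 2 * S 2 1) + u * (S 1 2 * z + S 2 1 * z⁻¹) - 1 := by
  simp only [blochSymbol, det_fin_two, Fin.isValue, Matrix.sub_apply, of_apply, cons_val', cons_val_zero,
    cons_val_one, cons_val_fin_one, submatrix_apply, Fin.succ_zero_eq_one, Fin.succ_one_eq_two,
    zero_sub, mul_neg, neg_mul, neg_neg]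
  field_simp
  ring

lemma bloch_eigenvalue_eq_div (hu : u ≠ 0) (hz : z ≠ 0)
    (hden : u ^ 2 * (S 1 1 * S 2 2 - S 1 2 * S 2 1) + u * (S 1 2 * z + S 2 1 * z⁻¹) - 1 ≠ 0) :
    S 0 0 + vecMul (fun j => S 0 j.succ)
        (blochSymbol (S.submatrix Fin.succ Fin.succ) (u⁻¹ * z⁻¹) (u⁻¹ * z))⁻¹ ⬝ᵥ
        (fun i => S i.succ 0) =
      (u ^ 2 * S.det + u * ((S 0 0 * S 1 2 - S 0 2 * S 1 0) * z
          + (S 0 0 * S 2 1 - S 2 0 * S 0 1) * z⁻¹) - S 0 0) /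
        (u ^ 2 * (S 1 1 * S 2 2 - S 1 2 * S 2 1) + u * (S 1 2 * z + S 2 1 * z⁻¹) - 1) := by
  set M := blochSymbol (S.submatrix Fin.succ Fin.succ) (u⁻¹ * z⁻¹) (u⁻¹ * z)
  rw [← sq_mul_det_blochSymbol S hu hz] at hden ⊢
  have hM : M.det ≠ 0 := right_ne_zero_of_mul hden
  calc _ = S 0 0 + M.det⁻¹ * (vecMul (fun j => S 0 j.succ) M.adjugate ⬝ᵥ fun i => S i.succ 0) := by
        rw [Matrix.inv_def, Ring.inverse_eq_inv', vecMul_smul, smul_dotProduct, smul_eq_mul]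
    _ = (S 0 0 * (u ^ 2 * M.det) +
          u ^ 2 * (vecMul (fun j => S 0 j.succ) M.adjugate ⬝ᵥ fun i => S i.succ 0)) /
          (u ^ 2 * M.det) := by
        field_simp
    _ = _ := by
        rw [sq_mul_det_blochSymbol S hu hz]
        congr 1
        simp only [M, blochSymbol, adjugate_fin_two, det_fin_three, vecMul, dotProduct,
          Fin.sum_univ_two, Fin.isValue, Matrix.sub_apply, of_apply, cons_val', cons_val_zero,
          cons_val_one, cons_val_fin_one, submatrix_apply, Fin.succ_zero_eq_one,
          Fin.succ_one_eq_two, zero_sub, neg_sub, mul_neg]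
        field_simp
        ring

end Symbol

section Fourier

variable {K : Type*} [Field K] {N : ℕ}

lemma pow_val_add_one_of_pow_eq_one {M : Type*} [Monoid M] [NeZero N] {ζ : M} (hζ : ζ ^ N = 1)
    (c : Fin N) : ζ ^ ((c + 1 : Fin N) : ℕ) = ζ * ζ ^ (c : ℕ) := by
  rw [Fin.val_add, Fin.val_one', Nat.add_mod_mod, ← pow_eq_pow_mod _ hζ, pow_succ']

lemma dft_apply_add_one [NeZero N] {ζ : K} (hζ : ζ ^ N = 1) (c : K) (b a : Fin N) :
    (of fun a b : Fin N => ζ ^ ((a : ℕ) * (b : ℕ)) / c) b (a + 1) =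
      ζ ^ (b : ℕ) * (of fun a b : Fin N => ζ ^ ((a : ℕ) * (b : ℕ)) / c) b a := by
  have hζb : (ζ ^ (b : ℕ)) ^ N = 1 := by rw [← pow_mul, mul_comm, pow_mul, hζ, one_pow]
  simp only [of_apply, pow_mul, pow_val_add_one_of_pow_eq_one hζb, mul_div_assoc]

lemma isUnit_det_dft {ζ : K} (hζ : IsPrimitiveRoot ζ N) {c : K} (hc : c ≠ 0) :
    IsUnit (of fun a b : Fin N => ζ ^ ((a : ℕ) * (b : ℕ)) / c).det := by
  have hV : (of fun a b : Fin N => ζ ^ ((a : ℕ) * (b : ℕ)) / c) =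
      c⁻¹ • vandermonde fun a : Fin N => ζ ^ (a : ℕ) := by
    ext a b
    simp [pow_mul, div_eq_inv_mul]
  have hinj : Function.Injective fun a : Fin N => ζ ^ (a : ℕ) :=
    fun a b h => Fin.ext (hζ.pow_inj a.2 b.2 h)
  rw [hV, det_smul, isUnit_iff_ne_zero]
  exact mul_ne_zero (pow_ne_zero _ (inv_ne_zero hc)) (det_vandermonde_ne_zero_iff.2 hinj)

lemma exp_add_two_pi_div_mul_I (θ : ℝ) (N b : ℕ) :
    exp (((θ + 2 * b * Real.pi / N : ℝ) : ℂ) * I) = exp (θ * I) * exp (2 * Real.pi * I / N) ^ b := by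
  rw [← Complex.exp_nat_mul, ← Complex.exp_add]
  congr 1
  push_cast
  ring

lemma exp_forward_phase_mul_inv (k d θ : ℝ) (N b : ℕ) :
    exp (-(k * d) * I - θ * I) * (exp (2 * Real.pi * I / N) ^ b)⁻¹ =
      (exp (k * d * I))⁻¹ * (exp (((θ + 2 * b * Real.pi / N : ℝ) : ℂ) * I))⁻¹ := by
  rw [exp_add_two_pi_div_mul_I, Complex.exp_sub, neg_mul, Complex.exp_neg, mul_inv]
  ring

lemma exp_backward_phase_mul (k d θ : ℝ) (N b : ℕ) :
    exp (-(k * d) * I + θ * I) * exp (2 * Real.pi * I / N) ^ b =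
      (exp (k * d * I))⁻¹ * exp (((θ + 2 * b * Real.pi / N : ℝ) : ℂ) * I) := by
  rw [exp_add_two_pi_div_mul_I, Complex.exp_add, neg_mul, Complex.exp_neg]
  ring

end Fourier

end RingScattering

open RingScattering

/-- for the ring of `N` vertices with identical local `3×3` scattering
matrix `S`, equal edge lengths `d` and flux per edge `θ`, the total scattering matrix
`𝕊(k,θ) = S_oo + S_oi [E(k,θ) - S_ii]⁻¹ S_io` is diagonalized by the DFT matrix `W`,
with eigenvalues `λ_a(k,θ) = λ(k, θ + 2π(a-1)/N)`, where `λ` is the fundamental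
eigenvalue given by the explicit ratio. Internal modes are indexed by
`Fin N × Fin 2`, the component `(a,0)` (resp. `(a,1)`) being the mode on the edge from
`a` towards `a+1` (resp. towards `a-1`). -/
theorem stmt3 (N : ℕ) [NeZero N] (S : Matrix (Fin 3) (Fin 3) ℂ) (d θ k : ℝ)
    (E Sii : Matrix (Fin N × Fin 2) (Fin N × Fin 2) ℂ)
    (Sio : Matrix (Fin N × Fin 2) (Fin N) ℂ) (Soi : Matrix (Fin N) (Fin N × Fin 2) ℂ)
    (Soo 𝕊 W : Matrix (Fin N) (Fin N) ℂ) (lam : ℝ → ℝ → ℂ)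
    -- propagation matrix: E = e^{-ikd} Σ_a (e^{-iθ} E_{(a,0),(a+1,1)} + e^{iθ} E_{(a+1,1),(a,0)})
    (hE : E = Matrix.of fun p q : Fin N × Fin 2 =>
      if p.2 = 0 ∧ q = (p.1 + 1, 1) then Complex.exp (-(k*d) * Complex.I - θ * Complex.I)
      else if p.2 = 1 ∧ q = (p.1 - 1, 0) then Complex.exp (-(k*d) * Complex.I + θ * Complex.I)
      else 0)
    -- local scattering blocks
    (hSii : Sii = Matrix.of fun p q : Fin N × Fin 2 =>
      if p.1 = q.1 then S p.2.succ q.2.succ else 0)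
    (hSio : Sio = Matrix.of fun (p : Fin N × Fin 2) (b : Fin N) =>
      if p.1 = b then S p.2.succ 0 else 0)
    (hSoi : Soi = Matrix.of fun (a : Fin N) (q : Fin N × Fin 2) =>
      if a = q.1 then S 0 q.2.succ else 0)
    (hSoo : Soo = S 0 0 • (1 : Matrix (Fin N) (Fin N) ℂ))
    -- the total scattering matrix
    (hinv : IsUnit (E - Sii))
    (h𝕊 : 𝕊 = Soo + Soi * (E - Sii)⁻¹ * Sio)
    -- the DFT matrix
    (hW : W = Matrix.of fun a b : Fin N =>
      Complex.exp (2 * Real.pi * Complex.I / N) ^ ((a : ℕ) * (b : ℕ)) / Real.sqrt N)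
    -- the fundamental eigenvalue
    (hlam : ∀ k' θ' : ℝ,
      (Complex.exp (2*(k':ℂ)*d*Complex.I) * (S 1 1 * S 2 2 - S 1 2 * S 2 1)
        + Complex.exp ((k':ℂ)*d*Complex.I) *
            (S 1 2 * Complex.exp ((θ':ℂ)*Complex.I) + S 2 1 * Complex.exp (-(θ':ℂ)*Complex.I))
        - 1) ≠ 0 ∧
      lam k' θ' =
      (Complex.exp (2*(k':ℂ)*d*Complex.I) * S.det
        + Complex.exp ((k':ℂ)*d*Complex.I) *
            ((S 0 0 * S 1 2 - S 0 2 * S 1 0) * Complex.exp ((θ':ℂ)*Complex.I)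
             + (S 0 0 * S 2 1 - S 2 0 * S 0 1) * Complex.exp (-(θ':ℂ)*Complex.I))
        - S 0 0) /
      (Complex.exp (2*(k':ℂ)*d*Complex.I) * (S 1 1 * S 2 2 - S 1 2 * S 2 1)
        + Complex.exp ((k':ℂ)*d*Complex.I) *
            (S 1 2 * Complex.exp ((θ':ℂ)*Complex.I) + S 2 1 * Complex.exp (-(θ':ℂ)*Complex.I))
        - 1)) :
    𝕊 = W⁻¹ * Matrix.diagonal (fun a : Fin N => lam k (θ + 2*(a : ℕ)*Real.pi/N)) * W := by
  set ω := exp (2 * Real.pi * I / N)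
  have hω : IsPrimitiveRoot ω N := isPrimitiveRoot_exp N (NeZero.ne N)
  have hsqrt : ((Real.sqrt N : ℝ) : ℂ) ≠ 0 :=
    ofReal_ne_zero.2 (Real.sqrt_ne_zero'.2 (Nat.cast_pos.2 (NeZero.pos N)))
  replace hE : E = ringHop N _ _ := hE
  replace hSii : Sii = ringDiag (Fin N) (S.submatrix Fin.succ Fin.succ) := hSii
  replace hSio : Sio = ringCol (Fin N) fun i => S i.succ 0 := hSio
  replace hSoi : Soi = ringRow (Fin N) fun j => S 0 j.succ := hSoi
  subst hE hSii hSio hSoi hSoo h𝕊 hW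
  refine eq_inv_mul_diagonal_mul_of_vecMul (isUnit_det_dft hω hsqrt) fun b => ?_
  obtain ⟨hden, hlam_b⟩ := hlam k (θ + 2 * (b : ℕ) * Real.pi / N)
  have hexp2 : exp (2 * k * d * I) = exp (k * d * I) ^ 2 := by
    rw [← Complex.exp_nat_mul]
    ring_nf
  rw [hexp2, neg_mul, Complex.exp_neg] at hden hlam_b
  have hα := exp_forward_phase_mul_inv k d θ N b
  have hβ := exp_backward_phase_mul k d θ N b
  have hu := exp_ne_zero (k * d * I)
  have hz := exp_ne_zero (((θ + 2 * (b : ℕ) * Real.pi / N : ℝ) : ℂ) * I)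
  have hM := sq_mul_det_blochSymbol S hu hz ▸ hden
  rw [← hα, ← hβ] at hM
  rw [hlam_b, ← bloch_eigenvalue_eq_div S hu hz hden, ← hα, ← hβ]
  exact vecMul_totalScattering_eq_smul _ _ _ _ _ _ (pow_ne_zero _ (hω.ne_zero (NeZero.ne N)))
    (dft_apply_add_one hω.pow_eq_one _ b) ((isUnit_iff_isUnit_det _).mp hinv)
    (isUnit_iff_ne_zero.2 (right_ne_zero_of_mul hM))
end

section
/- If the 3×3 matrix S(k) satisfies S(k)S(-k) = 1, then the fundamental eigenvalue can be written as λ(k,θ) = -det S(k) · g(k,θ)/g(-k,θ), where g(k,θ) = e^{ikd} - (S_{23}(-k) e^{iθ} + S_{32}(-k) e^{-iθ}) - det S(-k) · S_{11}(k) e^{-ikd}. -/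
open Matrix Complex

set_option maxHeartbeats 1000000 in
/-- if the `3×3` matrix `S(k)` satisfies `S(k)S(-k) = 1`, then the
fundamental eigenvalue can be written as `λ(k,θ) = -det S(k) · g(k,θ)/g(-k,θ)` where
`g(k,θ) = e^{ikd} - (S₂₃(-k)e^{iθ} + S₃₂(-k)e^{-iθ}) - det S(-k) · S₁₁(k) e^{-ikd}`.
(Indices are 0-based: `S 0 0 = S₁₁`, `S 1 2 = S₂₃`, etc.) -/
theorem stmt4 (S : ℂ → Matrix (Fin 3) (Fin 3) ℂ) (hS : ∀ k, S k * S (-k) = 1)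
    (d : ℝ) (θ : ℝ) (k : ℂ)
    (g : ℂ → ℂ)
    (hg : ∀ k' : ℂ, g k' = Complex.exp (Complex.I * k' * d)
      - (S (-k') 1 2 * Complex.exp (Complex.I * θ) + S (-k') 2 1 * Complex.exp (-Complex.I * θ))
      - (S (-k')).det * S k' 0 0 * Complex.exp (-Complex.I * k' * d))
    (hden : (Complex.exp (2*Complex.I*k*d) * (S k 1 1 * S k 2 2 - S k 1 2 * S k 2 1)
        + Complex.exp (Complex.I*k*d) * (S k 1 2 * Complex.exp (Complex.I*θ)
            + S k 2 1 * Complex.exp (-Complex.I*θ)) - 1) ≠ 0)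
    (hgden : g (-k) ≠ 0) :
    (Complex.exp (2*Complex.I*k*d) * (S k).det
        + Complex.exp (Complex.I*k*d) *
            ((S k 0 0 * S k 1 2 - S k 0 2 * S k 1 0) * Complex.exp (Complex.I*θ)
             + (S k 0 0 * S k 2 1 - S k 2 0 * S k 0 1) * Complex.exp (-Complex.I*θ))
        - S k 0 0) /
    (Complex.exp (2*Complex.I*k*d) * (S k 1 1 * S k 2 2 - S k 1 2 * S k 2 1)
        + Complex.exp (Complex.I*k*d) * (S k 1 2 * Complex.exp (Complex.I*θ)
            + S k 2 1 * Complex.exp (-Complex.I*θ)) - 1)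
    = -(S k).det * g k / g (-k) := by
  have hAB := hS k
  have hdet : (S k).det * (S (-k)).det = 1 := by
    rw [← Matrix.det_mul, hAB, Matrix.det_one]
  have hadj : (S k).det • S (-k) = (S k).adjugate := by
    calc (S k).det • S (-k) = ((S k).det • (1 : Matrix (Fin 3) (Fin 3) ℂ)) * S (-k) := by
          rw [Matrix.smul_mul, Matrix.one_mul]
      _ = (S k).adjugate * S k * S (-k) := by rw [Matrix.adjugate_mul]
      _ = (S k).adjugate := by rw [Matrix.mul_assoc, hAB, Matrix.mul_one]
  have key : ∀ i j, (S k).det * S (-k) i j = (S k).adjugate i j := by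
    intro i j
    have := congrFun (congrFun hadj i) j
    simpa using this
  have e12 := key 1 2
  have e21 := key 2 1
  have e00 := key 0 0
  simp [Matrix.adjugate_fin_three] at e12 e21 e00
  have hE2 : Complex.exp (2*Complex.I*k*d) =
      Complex.exp (Complex.I*k*d) * Complex.exp (Complex.I*k*d) := by
    rw [← Complex.exp_add]; ring_nf
  have hEE : Complex.exp (Complex.I*k*d) * Complex.exp (-Complex.I*k*d) = 1 := by
    rw [← Complex.exp_add, show Complex.I*k*d + -Complex.I*k*d = 0 by ring, Complex.exp_zero]
  have hgk := hg k
  have hgmk := hg (-k)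
  rw [neg_neg] at hgmk
  rw [show Complex.I * -k * d = -Complex.I*k*d by ring,
      show -Complex.I * -k * d = Complex.I*k*d by ring] at hgmk
  rw [div_eq_div_iff hden hgden, hgk, hgmk, hE2]
  linear_combination ((Complex.exp (Complex.I*(θ:ℂ))) + (-1)*(S k 2 1)*(Complex.exp (Complex.I*k*d))*(Complex.exp (Complex.I*(θ:ℂ)))*(Complex.exp (-Complex.I*(θ:ℂ))) + (-1)*(S k 1 2)*(Complex.exp (Complex.I*k*d))*(Complex.exp (Complex.I*(θ:ℂ)))*(Complex.exp (Complex.I*(θ:ℂ))) + (S k 1 2)*(S k 2 1)*(Complex.exp (Complex.I*k*d))*(Complex.exp (Complex.I*k*d))*(Complex.exp (Complex.I*(θ:ℂ))) + (-1)*(S k 1 1)*(S k 2 2)*(Complex.exp (Complex.I*k*d))*(Complex.exp (Complex.I*k*d))*(Complex.exp (Complex.I*(θ:ℂ)))) * e12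
    + ((Complex.exp (-Complex.I*(θ:ℂ))) + (-1)*(S k 2 1)*(Complex.exp (Complex.I*k*d))*(Complex.exp (-Complex.I*(θ:ℂ)))*(Complex.exp (-Complex.I*(θ:ℂ))) + (-1)*(S k 1 2)*(Complex.exp (Complex.I*k*d))*(Complex.exp (Complex.I*(θ:ℂ)))*(Complex.exp (-Complex.I*(θ:ℂ))) + (S k 1 2)*(S k 2 1)*(Complex.exp (Complex.I*k*d))*(Complex.exp (Complex.I*k*d))*(Complex.exp (-Complex.I*(θ:ℂ))) + (-1)*(S k 1 1)*(S k 2 2)*(Complex.exp (Complex.I*k*d))*(Complex.exp (Complex.I*k*d))*(Complex.exp (-Complex.I*(θ:ℂ)))) * e21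
    + ((-1)*((S k).det)*(Complex.exp (Complex.I*k*d))*(Complex.exp (Complex.I*k*d))*(Complex.exp (Complex.I*k*d)) + (S k 0 2)*(S k 1 0)*(Complex.exp (Complex.I*k*d))*(Complex.exp (Complex.I*k*d))*(Complex.exp (Complex.I*(θ:ℂ))) + (S k 0 1)*(S k 2 0)*(Complex.exp (Complex.I*k*d))*(Complex.exp (Complex.I*k*d))*(Complex.exp (-Complex.I*(θ:ℂ))) + (S k 0 0)*(Complex.exp (Complex.I*k*d)) + (-1)*(S k 0 0)*(S k 2 1)*(Complex.exp (Complex.I*k*d))*(Complex.exp (Complex.I*k*d))*(Complex.exp (-Complex.I*(θ:ℂ))) + (-1)*(S k 0 0)*(S k 1 2)*(Complex.exp (Complex.I*k*d))*(Complex.exp (Complex.I*k*d))*(Complex.exp (Complex.I*(θ:ℂ)))) * e00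
    + ((S k 0 0)*(Complex.exp (-Complex.I*k*d)) + (-1)*(S k 0 0)*(S k 2 1)*(Complex.exp (Complex.I*k*d))*(Complex.exp (-Complex.I*k*d))*(Complex.exp (-Complex.I*(θ:ℂ))) + (-1)*(S k 0 0)*(S k 1 2)*(Complex.exp (Complex.I*k*d))*(Complex.exp (-Complex.I*k*d))*(Complex.exp (Complex.I*(θ:ℂ))) + (S k 0 0)*(S k 1 2)*(S k 2 1)*(Complex.exp (Complex.I*k*d))*(Complex.exp (Complex.I*k*d))*(Complex.exp (-Complex.I*k*d)) + (-1)*(S k 0 0)*(S k 1 1)*(S k 2 2)*(Complex.exp (Complex.I*k*d))*(Complex.exp (Complex.I*k*d))*(Complex.exp (-Complex.I*k*d))) * hdet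
    + (((S k).det)*(Complex.exp (Complex.I*k*d)) + (-1)*(S k 0 2)*(S k 1 0)*(Complex.exp (Complex.I*(θ:ℂ))) + (-1)*(S k 0 1)*(S k 2 0)*(Complex.exp (-Complex.I*(θ:ℂ))) + (S k 0 0)*(S k 1 2)*(S k 2 1)*(Complex.exp (Complex.I*k*d)) + (-1)*(S k 0 0)*(S k 1 1)*(S k 2 2)*(Complex.exp (Complex.I*k*d))) * hEE
end

section
/- For the scale-invariant local matrix S^C with parameter t ∈ (0,1), the fundamental eigenvalue equals λ(k,θ) = -[t(cos θ - cos kd) + i(t-1) sin kd] / [t(cos θ - cos kd) - i(t-1) sin kd]. -/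
open Matrix Complex

/-!
The entries of `S^C` enter `λ` only through `det S^C = 1`, the cofactors
`S₁₁S₂₃ - S₁₃S₂₁ = S₁₁S₃₂ - S₃₁S₁₂ = -t` (both using `S₁₂² = 2t(1-t)`), `S₁₁ = S₂₂S₃₃ - S₂₃S₃₂ = 1-2t`
and `S₂₃ = S₃₂ = t`. With `E = e^{ikd}` the numerator and denominator of `λ` become
`E² - 2tE cos θ - (1-2t)` and `(1-2t)E² + 2tE cos θ - 1`, and the identities
`2E cos kd = E² + 1`, `2iE sin kd = E² - 1` show that these are `-2E` and `2E` times the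
numerator and denominator of the closed form.
-/

namespace Complex

theorem two_mul_exp_mul_I_mul_cos (z : ℂ) : 2 * exp (z * I) * cos z = exp (z * I) ^ 2 + 1 := by
  rw [exp_mul_I]
  linear_combination (-sin z ^ 2) * I_sq + sin_sq_add_cos_sq z

theorem two_mul_I_mul_exp_mul_I_mul_sin (z : ℂ) :
    2 * I * exp (z * I) * sin z = exp (z * I) ^ 2 - 1 := by
  rw [exp_mul_I]
  linear_combination sin z ^ 2 * I_sq - sin_sq_add_cos_sq z

end Complex

/-- `S^C`, with `s` in place of `√(2t(1-t))`. -/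
def scaleInvariantMatrix {R : Type*} [CommRing R] (t s : R) : Matrix (Fin 3) (Fin 3) R :=
  !![1 - 2 * t, s, s; s, t - 1, t; s, t, t - 1]

section ScaleInvariantMatrix

variable {R : Type*} [CommRing R] (t s : R)

theorem det_scaleInvariantMatrix (hs : s ^ 2 = 2 * t * (1 - t)) :
    (scaleInvariantMatrix t s).det = 1 := by
  simp only [det_fin_three, scaleInvariantMatrix, of_apply, cons_val', cons_val_zero, cons_val_one,
    cons_val, cons_val_fin_one]
  linear_combination 2 * hs

theorem scaleInvariantMatrix_minor :
    let M := scaleInvariantMatrix t s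
    M 1 1 * M 2 2 - M 1 2 * M 2 1 = 1 - 2 * t := by
  simp only [scaleInvariantMatrix, of_apply, cons_val', cons_val_zero, cons_val_one, cons_val,
    cons_val_fin_one]
  ring

theorem scaleInvariantMatrix_cofactor_eq (hs : s ^ 2 = 2 * t * (1 - t)) :
    let M := scaleInvariantMatrix t s
    M 0 0 * M 1 2 - M 0 2 * M 1 0 = -t := by
  simp only [scaleInvariantMatrix, of_apply, cons_val', cons_val_zero, cons_val_one, cons_val,
    cons_val_fin_one]
  linear_combination -hs

theorem scaleInvariantMatrix_cofactor_eq' (hs : s ^ 2 = 2 * t * (1 - t)) :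
    let M := scaleInvariantMatrix t s
    M 0 0 * M 2 1 - M 2 0 * M 0 1 = -t := by
  simp only [scaleInvariantMatrix, of_apply, cons_val', cons_val_zero, cons_val_one, cons_val,
    cons_val_fin_one]
  linear_combination -hs

end ScaleInvariantMatrix

theorem fundamentalEigenvalue_eq_of_invariants (S : Matrix (Fin 3) (Fin 3) ℂ) (t d θ k : ℝ)
    (hdet : S.det = 1) (h00 : S 0 0 = 1 - 2 * t) (h12 : S 1 2 = t) (h21 : S 2 1 = t)
    (hminor : S 1 1 * S 2 2 - S 1 2 * S 2 1 = 1 - 2 * t)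
    (hcof₁ : S 0 0 * S 1 2 - S 0 2 * S 1 0 = -t) (hcof₂ : S 0 0 * S 2 1 - S 2 0 * S 0 1 = -t) :
    (exp (2 * (k : ℂ) * d * I) * S.det
        + exp ((k : ℂ) * d * I) *
            ((S 0 0 * S 1 2 - S 0 2 * S 1 0) * exp ((θ : ℂ) * I)
             + (S 0 0 * S 2 1 - S 2 0 * S 0 1) * exp (-(θ : ℂ) * I))
        - S 0 0) /
    (exp (2 * (k : ℂ) * d * I) * (S 1 1 * S 2 2 - S 1 2 * S 2 1)
        + exp ((k : ℂ) * d * I) * (S 1 2 * exp ((θ : ℂ) * I) + S 2 1 * exp (-(θ : ℂ) * I)) - 1)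
    = -(((t : ℂ) * (Real.cos θ - Real.cos (k * d)) + I * ((t : ℂ) - 1) * Real.sin (k * d)) /
        ((t : ℂ) * (Real.cos θ - Real.cos (k * d)) - I * ((t : ℂ) - 1) * Real.sin (k * d))) := by
  rw [hdet, hminor, hcof₁, hcof₂, h00, h12, h21]
  push_cast
  set E := exp ((k : ℂ) * d * I)
  have hE2 : exp (2 * (k : ℂ) * d * I) = E ^ 2 := by
    rw [← exp_nat_mul]; ring_nf
  have hcos := two_mul_exp_mul_I_mul_cos ((k : ℂ) * d)
  have hsin := two_mul_I_mul_exp_mul_I_mul_sin ((k : ℂ) * d)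
  have hnum : E ^ 2 * 1 + E * (-(t : ℂ) * exp (θ * I) + -(t : ℂ) * exp (-θ * I)) - (1 - 2 * t)
      = 2 * E * -((t : ℂ) * (cos θ - cos (k * d)) + I * ((t : ℂ) - 1) * sin (k * d)) := by
    linear_combination (t * E) * two_cos (θ : ℂ) - t * hcos + (t - 1) * hsin
  have hden : E ^ 2 * (1 - 2 * t) + E * ((t : ℂ) * exp (θ * I) + (t : ℂ) * exp (-θ * I)) - 1
      = 2 * E * ((t : ℂ) * (cos θ - cos (k * d)) - I * ((t : ℂ) - 1) * sin (k * d)) := by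
    linear_combination -(t * E) * two_cos (θ : ℂ) + t * hcos + (t - 1) * hsin
  rw [hE2, hnum, hden, mul_div_mul_left _ _ (mul_ne_zero two_ne_zero (exp_ne_zero _)), neg_div]

theorem stmt6_general (t : ℝ) (ht : t ∈ Set.Ioo (0:ℝ) 1) (d θ k : ℝ)
    (S : Matrix (Fin 3) (Fin 3) ℂ)
    (hS : S = !![((1 - 2*t : ℝ) : ℂ), ((Real.sqrt (2*t*(1-t)) : ℝ) : ℂ), ((Real.sqrt (2*t*(1-t)) : ℝ) : ℂ);
                 ((Real.sqrt (2*t*(1-t)) : ℝ) : ℂ), ((t-1 : ℝ) : ℂ), ((t : ℝ) : ℂ);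
                 ((Real.sqrt (2*t*(1-t)) : ℝ) : ℂ), ((t : ℝ) : ℂ), ((t-1 : ℝ) : ℂ)]) :
    (Complex.exp (2*(k:ℂ)*d*Complex.I) * S.det
        + Complex.exp ((k:ℂ)*d*Complex.I) *
            ((S 0 0 * S 1 2 - S 0 2 * S 1 0) * Complex.exp ((θ:ℂ)*Complex.I)
             + (S 0 0 * S 2 1 - S 2 0 * S 0 1) * Complex.exp (-(θ:ℂ)*Complex.I))
        - S 0 0) /
    (Complex.exp (2*(k:ℂ)*d*Complex.I) * (S 1 1 * S 2 2 - S 1 2 * S 2 1)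
        + Complex.exp ((k:ℂ)*d*Complex.I) * (S 1 2 * Complex.exp ((θ:ℂ)*Complex.I)
            + S 2 1 * Complex.exp (-(θ:ℂ)*Complex.I)) - 1)
    = -(((t:ℂ) * (Real.cos θ - Real.cos (k*d)) + Complex.I * ((t:ℂ)-1) * Real.sin (k*d)) /
        ((t:ℂ) * (Real.cos θ - Real.cos (k*d)) - Complex.I * ((t:ℂ)-1) * Real.sin (k*d))) := by
  have hs : ((√(2 * t * (1 - t)) : ℝ) : ℂ) ^ 2 = 2 * t * (1 - t) := by
    rw [← ofReal_pow, Real.sq_sqrt (by nlinarith [ht.1, ht.2])]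
    push_cast; ring
  have hSC : S = scaleInvariantMatrix (t : ℂ) (√(2 * t * (1 - t)) : ℝ) := by
    rw [hS, scaleInvariantMatrix]; push_cast; rfl
  subst hSC
  exact fundamentalEigenvalue_eq_of_invariants _ t d θ k
    (det_scaleInvariantMatrix _ _ hs) rfl rfl rfl
    (scaleInvariantMatrix_minor _ _)
    (scaleInvariantMatrix_cofactor_eq _ _ hs)
    (scaleInvariantMatrix_cofactor_eq' _ _ hs)

/-- for the scale-invariant local matrix `S^C` with parameter `t ∈ (0,1)`,
the fundamental eigenvalue equals
`λ(k,θ) = -[t(cos θ - cos kd) + i(t-1) sin kd] / [t(cos θ - cos kd) - i(t-1) sin kd]`. -/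
theorem stmt6 (t : ℝ) (ht : t ∈ Set.Ioo (0:ℝ) 1) (d θ k : ℝ)
    (S : Matrix (Fin 3) (Fin 3) ℂ)
    (hS : S = !![((1 - 2*t : ℝ) : ℂ), ((Real.sqrt (2*t*(1-t)) : ℝ) : ℂ), ((Real.sqrt (2*t*(1-t)) : ℝ) : ℂ);
                 ((Real.sqrt (2*t*(1-t)) : ℝ) : ℂ), ((t-1 : ℝ) : ℂ), ((t : ℝ) : ℂ);
                 ((Real.sqrt (2*t*(1-t)) : ℝ) : ℂ), ((t : ℝ) : ℂ), ((t-1 : ℝ) : ℂ)])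
    (hden1 : (Complex.exp (2*(k:ℂ)*d*Complex.I) * (S 1 1 * S 2 2 - S 1 2 * S 2 1)
        + Complex.exp ((k:ℂ)*d*Complex.I) * (S 1 2 * Complex.exp ((θ:ℂ)*Complex.I)
            + S 2 1 * Complex.exp (-(θ:ℂ)*Complex.I)) - 1) ≠ 0)
    (hden2 : ((t:ℂ) * (Real.cos θ - Real.cos (k*d)) - Complex.I * ((t:ℂ)-1) * Real.sin (k*d)) ≠ 0) :
    (Complex.exp (2*(k:ℂ)*d*Complex.I) * S.det
        + Complex.exp ((k:ℂ)*d*Complex.I) *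
            ((S 0 0 * S 1 2 - S 0 2 * S 1 0) * Complex.exp ((θ:ℂ)*Complex.I)
             + (S 0 0 * S 2 1 - S 2 0 * S 0 1) * Complex.exp (-(θ:ℂ)*Complex.I))
        - S 0 0) /
    (Complex.exp (2*(k:ℂ)*d*Complex.I) * (S 1 1 * S 2 2 - S 1 2 * S 2 1)
        + Complex.exp ((k:ℂ)*d*Complex.I) * (S 1 2 * Complex.exp ((θ:ℂ)*Complex.I)
            + S 2 1 * Complex.exp (-(θ:ℂ)*Complex.I)) - 1)
    = -(((t:ℂ) * (Real.cos θ - Real.cos (k*d)) + Complex.I * ((t:ℂ)-1) * Real.sin (k*d)) /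
        ((t:ℂ) * (Real.cos θ - Real.cos (k*d)) - Complex.I * ((t:ℂ)-1) * Real.sin (k*d))) :=
  stmt6_general t ht d θ k S hS
end

section
/- The two iterated limits of λ(k,θ) at (k,θ) = (0,0) differ: lim_{k→0} lim_{θ→0} λ(k,θ) = 1 while lim_{θ→0} lim_{k→0} λ(k,θ) = -1 (for t ∈ (0,1), d > 0), hence λ is not continuous at (0,0). -/
open Complex Filter Topology

/-!
Write `λ(k, θ) = -z / z̄` with `z = a + b i`, `a = t (cos θ - cos kd)`, `b = (t - 1) sin kd`; this
depends only on the direction of `(a, b) ≠ 0`. On the axis `k = 0` we have `b = 0`, so `λ = -1`.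
On the axis `θ = 0`, after dividing by `k`, `a / k → 0` while `b / k → (t - 1) d ≠ 0`, so `λ → 1`.
Two different limits along the axes rule out continuity at the origin.
-/

noncomputable def phaseRatio (a b : ℝ) : ℂ := -((a + b * I) / (a - b * I))

section PhaseRatio

variable {a b : ℝ}

lemma ofReal_sub_mul_I_ne_zero (h : a ≠ 0 ∨ b ≠ 0) : (a : ℂ) - b * I ≠ 0 := by
  intro h0
  have hre := congrArg re h0
  have him := congrArg im h0
  simp only [sub_re, ofReal_re, mul_re, I_re, mul_zero, ofReal_im, I_im, mul_one, sub_self,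
    sub_zero, zero_re, sub_im, mul_im, add_zero, zero_sub, neg_eq_zero, zero_im] at hre him
  tauto

lemma phaseRatio_zero_right (ha : a ≠ 0) : phaseRatio a 0 = -1 := by
  simp [phaseRatio, ha]

lemma phaseRatio_zero_left (hb : b ≠ 0) : phaseRatio 0 b = 1 := by
  simp [phaseRatio, hb]

lemma phaseRatio_mul_mul {r : ℝ} (hr : r ≠ 0) (a b : ℝ) :
    phaseRatio (r * a) (r * b) = phaseRatio a b := by
  simp only [phaseRatio, ofReal_mul, mul_assoc, ← mul_add, ← mul_sub]
  rw [mul_div_mul_left _ _ (ofReal_ne_zero.mpr hr)]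

lemma Filter.Tendsto.phaseRatio {α : Type*} {l : Filter α} {u v : α → ℝ}
    (hu : Tendsto u l (𝓝 a)) (hv : Tendsto v l (𝓝 b)) (hab : a ≠ 0 ∨ b ≠ 0) :
    Tendsto (fun x => phaseRatio (u x) (v x)) l (𝓝 (phaseRatio a b)) := by
  have hu' := (continuous_ofReal.tendsto a).comp hu
  have hv' := (continuous_ofReal.tendsto b).comp hv
  exact ((hu'.add (hv'.mul_const I)).div (hu'.sub (hv'.mul_const I))
    (ofReal_sub_mul_I_ne_zero hab)).neg

lemma ContinuousAt.phaseRatio {X : Type*} [TopologicalSpace X] {f g : X → ℝ} {x : X}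
    (hf : ContinuousAt f x) (hg : ContinuousAt g x) (h : f x ≠ 0 ∨ g x ≠ 0) :
    ContinuousAt (fun y => phaseRatio (f y) (g y)) x :=
  hf.tendsto.phaseRatio hg.tendsto h

end PhaseRatio

lemma tendsto_inv_mul_of_hasDerivAt_zero {f : ℝ → ℝ} {f' : ℝ} (hf : HasDerivAt f f' 0)
    (h0 : f 0 = 0) : Tendsto (fun x => x⁻¹ * f x) (𝓝[≠] 0) (𝓝 f') := by
  simpa [h0] using hf.tendsto_slope_zero

lemma eventually_cos_mul_ne_one {d : ℝ} (hd : d ≠ 0) :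
    ∀ᶠ k in 𝓝[≠] (0 : ℝ), Real.cos (k * d) ≠ 1 := by
  have hsmall : ∀ᶠ k in 𝓝 (0 : ℝ), k * d ∈ Set.Ioo (-(2 * Real.pi)) (2 * Real.pi) :=
    ((continuous_mul_const d).tendsto' 0 0 (zero_mul d)).eventually
      (Ioo_mem_nhds (by linarith [Real.pi_pos]) (by linarith [Real.pi_pos]))
  filter_upwards [nhdsWithin_le_nhds hsmall, self_mem_nhdsWithin] with k hk hk0
  rw [Ne, Real.cos_eq_one_iff_of_lt_of_lt hk.1 hk.2]
  exact mul_ne_zero hk0 hd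

lemma not_continuousAt_of_tendsto_ne {X Y Z : Type*} [TopologicalSpace X] [TopologicalSpace Y]
    [TopologicalSpace Z] [T2Space Z] {f : X × Y → Z} {a : X} {b : Y}
    {l₁ : Filter X} {l₂ : Filter Y} [l₁.NeBot] [l₂.NeBot] (h₁ : l₁ ≤ 𝓝 a) (h₂ : l₂ ≤ 𝓝 b)
    {z₁ z₂ : Z} (hz₁ : Tendsto (fun x => f (x, b)) l₁ (𝓝 z₁))
    (hz₂ : Tendsto (fun y => f (a, y)) l₂ (𝓝 z₂)) (hne : z₁ ≠ z₂) :
    ¬ ContinuousAt f (a, b) := by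
  intro hf
  have e₁ : f (a, b) = z₁ := tendsto_nhds_unique
    ((hf.comp_of_eq (by fun_prop : ContinuousAt (·, b) a) rfl).tendsto.mono_left h₁) hz₁
  have e₂ : f (a, b) = z₂ := tendsto_nhds_unique
    ((hf.comp_of_eq (by fun_prop : ContinuousAt (a, ·) b) rfl).tendsto.mono_left h₂) hz₂
  exact hne (e₁.symm.trans e₂)

noncomputable def lambdaFun (t d k θ : ℝ) : ℂ :=
  phaseRatio (t * (Real.cos θ - Real.cos (k * d))) ((t - 1) * Real.sin (k * d))

section LambdaFun

variable {t d : ℝ}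

lemma lambdaFun_eq_neg_one_of_cos_eq_one (ht : t ≠ 0) {k θ : ℝ} (hk : Real.cos (k * d) = 1)
    (hθ : Real.cos θ ≠ 1) : lambdaFun t d k θ = -1 := by
  have hs : Real.sin (k * d) = 0 := by nlinarith [Real.sin_sq_add_cos_sq (k * d)]
  rw [lambdaFun, hk, hs, mul_zero]
  exact phaseRatio_zero_right (mul_ne_zero ht (sub_ne_zero.mpr hθ))

lemma continuousAt_lambdaFun_theta (ht : t ≠ 0) {k : ℝ} (hk : Real.cos (k * d) ≠ 1) :
    ContinuousAt (lambdaFun t d k) 0 :=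
  ContinuousAt.phaseRatio (by fun_prop) (by fun_prop)
    (Or.inl (mul_ne_zero ht (by rw [Real.cos_zero]; exact sub_ne_zero.mpr (Ne.symm hk))))

lemma continuousAt_lambdaFun_k (ht : t ≠ 0) {θ : ℝ} (hθ : Real.cos θ ≠ 1) :
    ContinuousAt (fun k => lambdaFun t d k θ) 0 :=
  ContinuousAt.phaseRatio (by fun_prop) (by fun_prop)
    (Or.inl (mul_ne_zero ht (by simpa [sub_eq_zero] using hθ)))

lemma tendsto_lambdaFun_theta_zero (ht : t ≠ 1) (hd : d ≠ 0) :
    Tendsto (fun k => lambdaFun t d k 0) (𝓝[≠] 0) (𝓝 1) := by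
  have hcos : HasDerivAt (fun k => t * (Real.cos 0 - Real.cos (k * d))) 0 0 := by
    simpa using (((Real.hasDerivAt_cos (0 * d)).comp 0 (hasDerivAt_mul_const d)).const_sub
      (Real.cos 0)).const_mul t
  have hsin : HasDerivAt (fun k => (t - 1) * Real.sin (k * d)) ((t - 1) * d) 0 := by
    simpa using ((Real.hasDerivAt_sin (0 * d)).comp 0 (hasDerivAt_mul_const d)).const_mul (t - 1)
  have hb : (t - 1) * d ≠ 0 := mul_ne_zero (sub_ne_zero.mpr ht) hd
  have hlim := (tendsto_inv_mul_of_hasDerivAt_zero hcos (by simp)).phaseRatio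
    (tendsto_inv_mul_of_hasDerivAt_zero hsin (by simp)) (Or.inr hb)
  rw [phaseRatio_zero_left hb] at hlim
  refine hlim.congr' ?_
  filter_upwards [self_mem_nhdsWithin] with k hk
  exact phaseRatio_mul_mul (inv_ne_zero hk) _ _

end LambdaFun

/-- the two iterated limits of `λ(k,θ)` at `(0,0)` differ:
`lim_{k→0} lim_{θ→0} λ(k,θ) = 1` while `lim_{θ→0} lim_{k→0} λ(k,θ) = -1`;
hence `λ` is not continuous at `(0,0)`. -/
theorem stmt10 (t d : ℝ) (ht : t ∈ Set.Ioo (0:ℝ) 1) (hd : 0 < d)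
    (lam : ℝ → ℝ → ℂ)
    (hlam : ∀ k θ : ℝ, lam k θ =
      -(((t:ℂ) * ((Real.cos θ : ℝ) - Real.cos (k*d)) + Complex.I * ((t:ℂ)-1) * (Real.sin (k*d) : ℝ)) /
        ((t:ℂ) * ((Real.cos θ : ℝ) - Real.cos (k*d)) - Complex.I * ((t:ℂ)-1) * (Real.sin (k*d) : ℝ)))) :
    (∃ L : ℝ → ℂ,
      (∀ k : ℝ, k ≠ 0 → Tendsto (fun θ : ℝ => lam k θ)
        (nhdsWithin 0 {θ : ℝ | Real.cos θ ≠ 1}) (nhds (L k))) ∧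
      Tendsto L (nhdsWithin 0 {k : ℝ | k ≠ 0}) (nhds 1)) ∧
    (∃ M : ℝ → ℂ,
      (∀ θ : ℝ, Real.cos θ ≠ 1 → Tendsto (fun k : ℝ => lam k θ)
        (nhdsWithin 0 {k : ℝ | k ≠ 0}) (nhds (M θ))) ∧
      Tendsto M (nhdsWithin 0 {θ : ℝ | Real.cos θ ≠ 1}) (nhds (-1))) ∧
    ¬ ContinuousAt (fun p : ℝ × ℝ => lam p.1 p.2) (0, 0) := by
  obtain ⟨ht0, ht1⟩ := ht
  obtain rfl : lam = lambdaFun t d := by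
    funext k θ
    rw [hlam, lambdaFun, phaseRatio]
    push_cast
    ring_nf
  have hk_axis := tendsto_lambdaFun_theta_zero ht1.ne hd.ne'
  have hθ_axis : ∀ θ, Real.cos θ ≠ 1 → lambdaFun t d 0 θ = -1 := fun θ hθ =>
    lambdaFun_eq_neg_one_of_cos_eq_one ht0.ne' (by simp) hθ
  -- where `cos (k d) = 1`, `λ(k, ·) ≡ -1` but `lambdaFun t d k 0` is the junk `phaseRatio 0 0 = 0`
  refine ⟨⟨fun k => if Real.cos (k * d) = 1 then -1 else lambdaFun t d k 0, fun k _ => ?_, ?_⟩,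
    ⟨fun _ => -1, fun θ hθ => ?_, tendsto_const_nhds⟩, ?_⟩
  · dsimp only
    split_ifs with hk
    · exact tendsto_const_nhds.congr' (eventually_nhdsWithin_of_forall fun θ hθ =>
        (lambdaFun_eq_neg_one_of_cos_eq_one ht0.ne' hk hθ).symm)
    · exact (continuousAt_lambdaFun_theta ht0.ne' hk).tendsto.mono_left nhdsWithin_le_nhds
  · refine hk_axis.congr' ?_
    filter_upwards [eventually_cos_mul_ne_one hd.ne'] with k hk
    simp [hk]
  · simpa [hθ_axis θ hθ] using
      (continuousAt_lambdaFun_k (d := d) ht0.ne' hθ).tendsto.mono_left nhdsWithin_le_nhds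
  · refine not_continuousAt_of_tendsto_ne (l₂ := 𝓝[≠] 0) nhdsWithin_le_nhds nhdsWithin_le_nhds
      hk_axis (tendsto_const_nhds.congr' ?_) (by norm_num : (1 : ℂ) ≠ -1)
    filter_upwards [eventually_cos_mul_ne_one one_ne_zero] with θ hθ
    rw [mul_one] at hθ
    exact (hθ_axis θ hθ).symm
end

section
/- The poles of the fundamental eigenvalue of the scale-invariant ring, given by solutions of e^{-2ikd} - 2 S_{23} cos θ e^{-ikd} + S_{23}² - S_{22}² = 0 with S_{22} = t-1, S_{23} = t, are characterized by e^{-ikd} = t cos θ ± √(1 - 2t + t² cos²θ); this equation admits a real solution k only if t = 1 or cos θ = ±1. -/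
open Complex

/-
Both signs give a root of `z² - 2 t cos θ · z + (2t - 1) = 0`, a quadratic with real
coefficients. A unimodular root of a real quadratic `z² + p z + q` is either real, hence `±1`,
or non-real, in which case its conjugate `z⁻¹` is the other root and `q = z · z⁻¹ = 1`.
Here `q = 1` means `t = 1`, while `z = ±1` forces `2t (1 ∓ cos θ) = 0`.
-/

theorem sq_sub_two_mul_add_eq_zero_of_eq_add_or_eq_sub {R : Type*} [CommRing R]
    {a b s z : R} (hs : s ^ 2 = b) (hz : z = a + s ∨ z = a - s) :
    z ^ 2 - 2 * a * z + (a ^ 2 - b) = 0 := by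
  rcases hz with rfl | rfl <;> linear_combination hs

theorem Complex.eq_one_or_eq_neg_one_or_eq_one_of_sq_add_mul_add_eq_zero {z : ℂ} {p q : ℝ}
    (hz : z ^ 2 + p * z + q = 0) (hnorm : ‖z‖ = 1) :
    z = 1 ∨ z = -1 ∨ q = 1 := by
  have hsq : z.re ^ 2 + z.im ^ 2 = 1 := by
    have := Complex.sq_norm z
    rw [hnorm, normSq_apply] at this
    linear_combination -this
  have hre : z.re ^ 2 - z.im ^ 2 + p * z.re + q = 0 := by
    simpa [pow_two] using congrArg re hz
  have him : z.im * (2 * z.re + p) = 0 := by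
    have := congrArg im hz
    simp only [pow_two, add_im, mul_im, ofReal_re, ofReal_im, zero_im] at this
    linear_combination this
  rcases mul_eq_zero.mp him with h0 | hp
  · have : (z.re - 1) * (z.re + 1) = 0 := by rw [h0] at hsq; linear_combination hsq
    rcases mul_eq_zero.mp this with h | h
    · exact .inl (Complex.ext (by simp only [one_re]; linarith) (by simp [h0]))
    · exact .inr (.inl (Complex.ext (by simp only [neg_re, one_re]; linarith) (by simp [h0])))
  · exact .inr (.inr (by linear_combination hre + hsq - z.re * hp))

/-- the poles of the fundamental eigenvalue of the scale-invariant ring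
satisfy `e^{-ikd} = t cos θ ± √(1 - 2t + t² cos²θ)` (the square root `s` being possibly
imaginary); if such a value is unimodular (i.e. `k` is real), then `t = 1` or
`cos θ = ±1`, for `t ∈ (0,1]`. -/
theorem stmt11 (t θ : ℝ) (ht : t ∈ Set.Ioc (0:ℝ) 1)
    (z s : ℂ)
    (hs : s^2 = 1 - 2*(t:ℂ) + (t:ℂ)^2 * (Real.cos θ : ℂ)^2)
    (hz : z = (t:ℂ) * (Real.cos θ : ℂ) + s ∨ z = (t:ℂ) * (Real.cos θ : ℂ) - s)
    (huni : ‖z‖ = 1) :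
    t = 1 ∨ Real.cos θ = 1 ∨ Real.cos θ = -1 := by
  generalize Real.cos θ = c at *
  have hquad : z ^ 2 + ((-2 * t * c : ℝ) : ℂ) * z + ((2 * t - 1 : ℝ) : ℂ) = 0 := by
    push_cast
    linear_combination sq_sub_two_mul_add_eq_zero_of_eq_add_or_eq_sub hs hz
  rcases Complex.eq_one_or_eq_neg_one_or_eq_one_of_sq_add_mul_add_eq_zero hquad huni
    with rfl | rfl | hq
  · have : t * (1 - c) = 0 := by
      have := congrArg re hquad
      simp only [one_pow, mul_one, add_re, one_re, ofReal_re, zero_re] at this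
      linear_combination this / 2
    exact .inr (.inl (by linarith [(mul_eq_zero.mp this).resolve_left ht.1.ne']))
  · have : t * (1 + c) = 0 := by
      have := congrArg re hquad
      simp only [even_two, Even.neg_pow, one_pow, mul_neg, mul_one, add_re, one_re, neg_re,
        ofReal_re, zero_re] at this
      linear_combination this / 2
    exact .inr (.inr (by linarith [(mul_eq_zero.mp this).resolve_left ht.1.ne']))
  · exact .inl (by linarith)
end

section
/- Suppose τ(x) = c·x² + O(x⁴) as x → 0⁺ with 0 ≤ τ ≤ 1 on [0,∞). Then β² · (2/β) ∫_0^∞ τ(√(z/β)) e^z/(1+e^z)² dz/(2π) → (c/π) ln 2 as β → ∞; i.e. the μ=0 thermal noise behaves as (c ln2)/(π β²). -/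
/-!
Since `τ(x) = c x² + o(x²)` at `0⁺`, the rescaled integrand `β τ(√(z/β))` tends to `c z`
pointwise; since moreover `τ` is bounded, `|τ x| ≤ A x²` on `(0, ∞)`, so `β |τ(√(z/β))| ≤ A z`.
Dominated convergence against the weight `e^z/(1+e^z)²` gives the limit
`c ∫₀^∞ z e^z/(1+e^z)² dz`, and `-z/(1+e^z) - log(1+e^{-z})` is an antiderivative of that
integrand with values `-log 2` at `0` and `0` at `∞`.
-/

open MeasureTheory Real Filter Asymptotics Topology

theorem exists_abs_le_mul_pow_of_isBigO {f : ℝ → ℝ} {M : ℝ} {n : ℕ}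
    (hM : ∀ x, 0 < x → |f x| ≤ M) (hf : f =O[𝓝[>] 0] fun x => x ^ n) :
    ∃ A, ∀ x, 0 < x → |f x| ≤ A * x ^ n := by
  obtain ⟨C, hC⟩ := hf.bound
  obtain ⟨δ, hδ, hCδ⟩ := Metric.eventually_nhds_iff.mp (eventually_nhdsWithin_iff.mp hC)
  refine ⟨max C 0 + M / δ ^ n, fun x hx => ?_⟩
  have hM0 : 0 ≤ M := (abs_nonneg _).trans (hM x hx)
  have hxn : 0 ≤ x ^ n := by positivity
  rcases lt_or_ge x δ with hxδ | hδx
  · have hnear : |f x| ≤ C * |x ^ n| := hCδ (by simpa [abs_of_pos hx] using hxδ) hx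
    rw [abs_of_nonneg hxn] at hnear
    nlinarith [le_max_left C 0, div_nonneg hM0 (pow_nonneg hδ.le n)]
  · have hfar : M ≤ M / δ ^ n * x ^ n := by
      rw [div_mul_eq_mul_div, le_div_iff₀ (by positivity)]
      exact mul_le_mul_of_nonneg_left (pow_le_pow_left₀ hδ.le hδx n) hM0
    nlinarith [le_max_right C 0, hM x hx]

theorem tendsto_sqrt_div_atTop_nhdsGT_zero {z : ℝ} (hz : 0 < z) :
    Tendsto (fun β => √(z / β)) atTop (𝓝[>] 0) := by
  refine tendsto_nhdsWithin_iff.mpr ⟨?_, ?_⟩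
  · simpa [Function.comp_def] using
      (continuous_sqrt.tendsto 0).comp (tendsto_const_nhds.div_atTop tendsto_id)
  · filter_upwards [eventually_gt_atTop 0] with β hβ
    exact sqrt_pos.mpr (div_pos hz hβ)

theorem tendsto_mul_comp_sqrt_div {f : ℝ → ℝ} {c z : ℝ}
    (hf : (fun x => f x - c * x ^ 2) =o[𝓝[>] 0] fun x => x ^ 2) (hz : 0 < z) :
    Tendsto (fun β => β * f √(z / β)) atTop (𝓝 (c * z)) := by
  have hsq : ∀ᶠ β in atTop, β * √(z / β) ^ 2 = z := by
    filter_upwards [eventually_gt_atTop 0] with β hβ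
    rw [sq_sqrt (div_pos hz hβ).le]
    field_simp
  have hrem : (fun β => β * (f √(z / β) - c * √(z / β) ^ 2)) =o[atTop] fun _ => z :=
    ((isBigO_refl (fun β : ℝ => β) atTop).mul_isLittleO
      (hf.comp_tendsto (tendsto_sqrt_div_atTop_nhdsGT_zero hz))).congr'
      (.of_forall fun _ => rfl) hsq
  have hlim := ((isLittleO_const_iff hz.ne').mp hrem).add_const (c * z)
  rw [zero_add] at hlim
  refine hlim.congr' ?_
  filter_upwards [hsq] with β hβ
  linear_combination (-c) * hβ

theorem tendsto_mul_integral_comp_sqrt_div {f w : ℝ → ℝ} {c M : ℝ} (hf : Measurable f)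
    (hM : ∀ x, 0 < x → |f x| ≤ M) (hasymp : (fun x => f x - c * x ^ 2) =o[𝓝[>] 0] fun x => x ^ 2)
    (hw : Measurable w) (hint : IntegrableOn (fun z => z * w z) (Set.Ioi 0)) :
    Tendsto (fun β => β * ∫ z in Set.Ioi 0, f √(z / β) * w z) atTop
      (𝓝 (c * ∫ z in Set.Ioi 0, z * w z)) := by
  have hf2 : f =O[𝓝[>] 0] fun x => x ^ 2 :=
    (hasymp.isBigO.add (isBigO_const_mul_self c _ _)).congr_left fun x => by ring
  obtain ⟨A, hA⟩ := exists_abs_le_mul_pow_of_isBigO hM hf2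
  simp_rw [← integral_const_mul, ← mul_assoc]
  refine tendsto_integral_filter_of_dominated_convergence (fun z => A * ‖z * w z‖)
    (Eventually.of_forall fun β => by fun_prop) ?_ (hint.norm.const_mul A) ?_
  · filter_upwards [eventually_gt_atTop 0] with β hβ
    filter_upwards [self_mem_ae_restrict measurableSet_Ioi] with z (hz : 0 < z)
    have hx := hA _ (sqrt_pos.mpr (div_pos hz hβ))
    rw [sq_sqrt (div_pos hz hβ).le] at hx
    calc ‖β * f √(z / β) * w z‖ = β * |f √(z / β)| * |w z| := by
          rw [norm_mul, norm_mul, norm_of_nonneg hβ.le, norm_eq_abs, norm_eq_abs]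
      _ ≤ β * (A * (z / β)) * |w z| := by gcongr
      _ = A * ‖z * w z‖ := by
          rw [norm_mul, norm_of_nonneg hz.le, norm_eq_abs]
          field_simp
  · filter_upwards [self_mem_ae_restrict measurableSet_Ioi] with z (hz : 0 < z)
    simpa only [mul_assoc] using (tendsto_mul_comp_sqrt_div hasymp hz).mul_const (w z)

theorem hasDerivAt_neg_div_one_add_exp_sub_log (x : ℝ) :
    HasDerivAt (fun z => -z / (1 + exp z) - log (1 + exp (-z)))
      (x * (exp x / (1 + exp x) ^ 2)) x := by
  have hquot : HasDerivAt (fun z => -z / (1 + exp z))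
      ((-1 * (1 + exp x) - -x * exp x) / (1 + exp x) ^ 2) x :=
    (hasDerivAt_id x).neg.div ((hasDerivAt_exp x).const_add 1) (by positivity)
  have hlog : HasDerivAt (fun z => log (1 + exp (-z))) (exp (-x) * -1 / (1 + exp (-x))) x :=
    (((hasDerivAt_exp (-x)).comp x (hasDerivAt_id x).neg).const_add 1).log
      (by positivity : 1 + exp (-x) ≠ 0)
  refine (hquot.sub hlog).congr_deriv ?_
  rw [exp_neg]
  field_simp
  ring

theorem tendsto_neg_div_one_add_exp_sub_log :
    Tendsto (fun z => -z / (1 + exp z) - log (1 + exp (-z))) atTop (𝓝 0) := by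
  have hquot : Tendsto (fun z => -z / (1 + exp z)) atTop (𝓝 0) := by
    refine squeeze_zero_norm' ?_ (by simpa using tendsto_pow_mul_exp_neg_atTop_nhds_zero 1)
    filter_upwards [eventually_ge_atTop 0] with z hz
    rw [norm_div, norm_neg, norm_of_nonneg hz, norm_of_nonneg (by positivity), exp_neg,
      ← div_eq_mul_inv]
    gcongr
    linarith
  have hlog : Tendsto (fun z => log (1 + exp (-z))) atTop (𝓝 0) := by
    have hone : Tendsto (fun z => 1 + exp (-z)) atTop (𝓝 1) := by
      simpa using tendsto_exp_neg_atTop_nhds_zero.const_add 1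
    simpa using hone.log one_ne_zero
  simpa using hquot.sub hlog

theorem integrableOn_mul_exp_div_one_add_exp_sq :
    IntegrableOn (fun z => z * (exp z / (1 + exp z) ^ 2)) (Set.Ioi 0) :=
  integrableOn_Ioi_deriv_of_nonneg' (fun x _ => hasDerivAt_neg_div_one_add_exp_sub_log x)
    (fun x (hx : 0 < x) => by positivity) tendsto_neg_div_one_add_exp_sub_log

theorem integral_mul_exp_div_one_add_exp_sq :
    ∫ z in Set.Ioi 0, z * (exp z / (1 + exp z) ^ 2) = log 2 := by
  rw [integral_Ioi_of_hasDerivAt_of_nonneg' (fun x _ => hasDerivAt_neg_div_one_add_exp_sub_log x)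
    (fun x (hx : 0 < x) => by positivity) tendsto_neg_div_one_add_exp_sub_log]
  norm_num

theorem stmt16_general (τ : ℝ → ℝ) (hmeas : Measurable τ)
    (hτ : ∀ x : ℝ, 0 ≤ x → 0 ≤ τ x ∧ τ x ≤ 1)
    (c : ℝ)
    (hasymp : (fun x : ℝ => τ x - c * x^2) =O[nhdsWithin 0 (Set.Ioi 0)] (fun x : ℝ => x^4)) :
    Tendsto (fun β : ℝ => β^2 * ((2/β) * ((1/(2*Real.pi)) *
        ∫ z in Set.Ioi (0:ℝ), τ (Real.sqrt (z/β)) * Real.exp z / (1 + Real.exp z)^2)))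
      atTop (𝓝 ((c/Real.pi) * Real.log 2)) := by
  have hbdd : ∀ x, 0 < x → |τ x| ≤ 1 := fun x hx =>
    abs_le.mpr ⟨by linarith [(hτ x hx.le).1], (hτ x hx.le).2⟩
  have hlittle : (fun x => τ x - c * x ^ 2) =o[𝓝[>] 0] fun x => x ^ 2 :=
    hasymp.trans_isLittleO ((isLittleO_pow_pow (by norm_num)).mono nhdsWithin_le_nhds)
  have hlim := (tendsto_mul_integral_comp_sqrt_div hmeas hbdd hlittle (by fun_prop)
    integrableOn_mul_exp_div_one_add_exp_sq).const_mul π⁻¹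
  rw [integral_mul_exp_div_one_add_exp_sq, ← mul_assoc, inv_mul_eq_div] at hlim
  refine hlim.congr' ?_
  filter_upwards [eventually_ne_atTop 0] with β hβ
  simp_rw [mul_div_assoc]
  field_simp

/-- if `τ(x) = c x² + O(x⁴)` as `x → 0⁺` with `0 ≤ τ ≤ 1` on `[0,∞)`,
then `β² · (2/β) ∫_0^∞ τ(√(z/β)) e^z/(1+e^z)² dz/(2π) → (c/π) ln 2` as `β → ∞`;
i.e. the `μ = 0` thermal noise behaves as `(c ln 2)/(π β²)`. -/
theorem stmt16 (τ : ℝ → ℝ) (hmeas : Measurable τ)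
    (hτ : ∀ x : ℝ, 0 ≤ x → 0 ≤ τ x ∧ τ x ≤ 1)
    (c : ℝ) (hc : 0 ≤ c)
    (hasymp : (fun x : ℝ => τ x - c * x^2) =O[nhdsWithin 0 (Set.Ioi 0)] (fun x : ℝ => x^4)) :
    Tendsto (fun β : ℝ => β^2 * ((2/β) * ((1/(2*Real.pi)) *
        ∫ z in Set.Ioi (0:ℝ), τ (Real.sqrt (z/β)) * Real.exp z / (1 + Real.exp z)^2)))
      atTop (𝓝 ((c/Real.pi) * Real.log 2)) :=
  stmt16_general τ hmeas hτ c hasymp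
end
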